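/- Let q be a primitive m-th root of unity in K, λ₁, λ₂ ∈ K nonzero, and p > 1. Then the quotient Q_{p,m} = M(λ)/M_{p,m} of the Verma module is a right Mat₂(q)-module of K-dimension p·m² that is indecomposable (it is not the direct sum of two nonzero submodules) but is neither simple nor semisimple. -/

import Mathlib

/-!
Every submodule `W` of `M(λ)` containing `M_{p,m}` is one of the `M_{j,m}`, so the submodules of
`Q_{p,m}` form a chain. For `p > 1` the term `M_{1,m}/M_{p,m}` of this chain is proper and nonzero
and has no complement, and no two nonzero terms of a chain intersect trivially.

To classify `W`, let `b₀` be the lowest level (index `b`) occurring in `W`. `Z12` is diagonal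
with eigenvalue `λ₁ q^(a+b)` on `f(a,b)`, so projecting to one of its eigenspaces yields `w ∈ W`
whose only term at level `b₀` is `f(a₀,b₀)`. Applying powers of `Z22` to `w` and inducting
downward from `M_{p,m} ⊆ W` puts every `f(a,c)` with `c ≥ b₀` in `W` (`Z21` cycles through the
`a` with nonzero scalars). Finally `Z11` lowers the level `c` with coefficient `q^c - 1`, nonzero
unless `m ∣ c`, which fills in the levels down to `⌊b₀/m⌋ m`; hence `W = M_{⌊b₀/m⌋,m}`.
-/

noncomputable section

open FreeAlgebra MulOpposite

/-- The relations of the Dipper–Donkin quantized matrix algebra of rank 2: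
`Z12·Z11 = Z11·Z12`, `Z21·Z11 = q·Z11·Z21`, `Z22·Z21 = Z21·Z22`, `Z22·Z12 = q·Z12·Z22`,
`Z21·Z12 = q·Z12·Z21`, `Z22·Z11 = Z11·Z22 + (q−1)·Z12·Z21`, where the generators
`Z11, Z12, Z21, Z22` are the images of `0, 1, 2, 3 : Fin 4`. -/
inductive DDrel {K : Type*} [Field K] (q : K) :
    FreeAlgebra K (Fin 4) → FreeAlgebra K (Fin 4) → Prop
  | r1 : DDrel q (ι K (1 : Fin 4) * ι K (0 : Fin 4)) (ι K (0 : Fin 4) * ι K (1 : Fin 4))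
  | r2 : DDrel q (ι K (2 : Fin 4) * ι K (0 : Fin 4)) (q • (ι K (0 : Fin 4) * ι K (2 : Fin 4)))
  | r3 : DDrel q (ι K (3 : Fin 4) * ι K (2 : Fin 4)) (ι K (2 : Fin 4) * ι K (3 : Fin 4))
  | r4 : DDrel q (ι K (3 : Fin 4) * ι K (1 : Fin 4)) (q • (ι K (1 : Fin 4) * ι K (3 : Fin 4)))
  | r5 : DDrel q (ι K (2 : Fin 4) * ι K (1 : Fin 4)) (q • (ι K (1 : Fin 4) * ι K (2 : Fin 4)))
  | r6 : DDrel q (ι K (3 : Fin 4) * ι K (0 : Fin 4))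
      (ι K (0 : Fin 4) * ι K (3 : Fin 4) + (q - 1) • (ι K (1 : Fin 4) * ι K (2 : Fin 4)))

/-- The Dipper–Donkin quantized matrix algebra `Mat₂(q)`: the quotient of the free
`K`-algebra on four generators by the two-sided ideal generated by the relations above. -/
abbrev DDMat2 {K : Type*} [Field K] (q : K) := RingQuot (DDrel q)

variable {K : Type*} [Field K]

/-- The generator `Z11` of `Mat₂(q)`. -/
def Z11 (q : K) : DDMat2 q := RingQuot.mkAlgHom K (DDrel q) (ι K (0 : Fin 4))
/-- The generator `Z12` of `Mat₂(q)`. -/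
def Z12 (q : K) : DDMat2 q := RingQuot.mkAlgHom K (DDrel q) (ι K (1 : Fin 4))
/-- The generator `Z21` of `Mat₂(q)`. -/
def Z21 (q : K) : DDMat2 q := RingQuot.mkAlgHom K (DDrel q) (ι K (2 : Fin 4))
/-- The generator `Z22` of `Mat₂(q)`. -/
def Z22 (q : K) : DDMat2 q := RingQuot.mkAlgHom K (DDrel q) (ι K (3 : Fin 4))

/-- The underlying space of the Verma module `M(λ)`: the `K`-vector space with basis
`f(a,b)`, `a : Fin m`, `b : ℕ`, realized as finitely supported functions. -/
abbrev VermaSpace (K : Type*) [Field K] (m : ℕ) := ((Fin m × ℕ) →₀ K)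

variable (q la lb : K) (m : ℕ) [NeZero m]

/-- The action of `Z11` on the Verma module `M(λ)`:
`f(a,b)·Z11 = 0` if `b = 0` and `λ₁·q^a·(q^b − 1)·f(a+1,b−1)` if `b ≥ 1`, where `f(m,c)`
is interpreted as `λ₂·f(0,c)` (addition in `Fin m` is cyclic). -/
noncomputable def VF11 : VermaSpace K m →ₗ[K] VermaSpace K m :=
  Finsupp.linearCombination K fun p : Fin m × ℕ =>
    if p.2 = 0 then 0 else
      ((if (p.1 : ℕ) = m - 1 then lb else 1) * la * q ^ (p.1 : ℕ) * (q ^ p.2 - 1)) •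
        Finsupp.single (p.1 + 1, p.2 - 1) (1 : K)

/-- The action of `Z12` on the Verma module: `f(a,b)·Z12 = q^{a+b}·λ₁·f(a,b)`. -/
noncomputable def VF12 : VermaSpace K m →ₗ[K] VermaSpace K m :=
  Finsupp.linearCombination K fun p : Fin m × ℕ =>
    (q ^ ((p.1 : ℕ) + p.2) * la) • Finsupp.single p (1 : K)

/-- The action of `Z21` on the Verma module:
`f(a,b)·Z21 = f(a+1,b)` if `a ≤ m−2` and `λ₂·f(0,b)` if `a = m−1`. -/
noncomputable def VF21 : VermaSpace K m →ₗ[K] VermaSpace K m :=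
  Finsupp.linearCombination K fun p : Fin m × ℕ =>
    (if (p.1 : ℕ) = m - 1 then lb else 1) • Finsupp.single (p.1 + 1, p.2) (1 : K)

/-- The action of `Z22` on the Verma module: `f(a,b)·Z22 = f(a,b+1)`. -/
noncomputable def VF22 : VermaSpace K m →ₗ[K] VermaSpace K m :=
  Finsupp.linearCombination K fun p : Fin m × ℕ =>
    Finsupp.single (p.1, p.2 + 1) (1 : K)

/-- The subspace `M_{p,m}` of the Verma module, spanned by the basis vectors `f(a,b)`
with `b ≥ p·m`. -/
def Mpm (p : ℕ) : Submodule K (VermaSpace K m) :=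
  Submodule.span K
    {v : VermaSpace K m | ∃ (a : Fin m) (b : ℕ), p * m ≤ b ∧ v = Finsupp.single (a, b) (1 : K)}

namespace Finsupp

variable {σ : Type*}

theorem linearCombination_smul_single_one_apply (μ : σ → K) (v : σ →₀ K) (y : σ) :
    linearCombination K (fun x => μ x • single x (1 : K)) v y = μ y * v y := by
  classical
  induction v using Finsupp.induction_linear with
  | zero => simp
  | add v w hv hw => simp only [map_add, add_apply, hv, hw, mul_add]
  | single x c => by_cases h : x = y <;> simp [h, mul_comm]

theorem supported_le_of_single_mem (W : Submodule K (σ →₀ K)) :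
    supported K K {x | single x (1 : K) ∈ W} ≤ W := by
  rw [supported_eq_span_single, Submodule.span_le]
  rintro _ ⟨x, hx, rfl⟩
  exact hx

theorem single_mem_of_apply_ne_zero {W : Submodule K (σ →₀ K)} {u : σ →₀ K} (hu : u ∈ W)
    {x₀ : σ} (hx₀ : u x₀ ≠ 0) (h : ∀ x ∈ u.support, x ≠ x₀ → single x (1 : K) ∈ W) :
    single x₀ (1 : K) ∈ W := by
  classical
  have herase : u.erase x₀ ∈ W := by
    refine supported_le_of_single_mem W ((mem_supported _ _).2 fun x hx => ?_)
    rw [Finset.mem_coe, support_erase, Finset.mem_erase] at hx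
    exact h x hx.2 hx.1
  have hsingle : single x₀ (u x₀) ∈ W := by
    rw [eq_sub_of_add_eq' (erase_add_single x₀ u)]
    exact sub_mem hu herase
  rwa [← smul_single_one, Submodule.smul_mem_iff W hx₀] at hsingle

theorem filter_mem_of_diagonal [DecidableEq K] {W : Submodule K (σ →₀ K)}
    {f : (σ →₀ K) →ₗ[K] (σ →₀ K)} {μ : σ → K} (hf : ∀ v y, f v y = μ y * v y)
    (hW : ∀ v ∈ W, f v ∈ W) {v : σ →₀ K} (hv : v ∈ W) (t : K) :
    v.filter (fun x => μ x = t) ∈ W := by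
  suffices ∀ S : Finset K, ∀ v ∈ W, (∀ x ∈ v.support, μ x ∈ S ∨ μ x = t) →
      v.filter (fun x => μ x = t) ∈ W from
    this _ v hv fun x hx => Or.inl (Finset.mem_image_of_mem μ hx)
  intro S
  induction S using Finset.induction_on with
  | empty =>
    intro v hv hsupp
    rwa [(filter_eq_self_iff _ _).2 fun x hx => by simpa using hsupp x (mem_support_iff.2 hx)]
  | insert s S _ ih =>
    intro v hv hsupp
    by_cases hst : s = t
    · subst hst
      exact ih v hv fun x hx => by have := hsupp x hx; rw [Finset.mem_insert] at this; tauto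
    -- `f v - s • v` kills the `s`-eigencomponent and rescales the `t`-eigencomponent
    have hfilter : (f v - s • v).filter (fun x => μ x = t) =
        (t - s) • v.filter (fun x => μ x = t) := by
      ext y
      by_cases hy : μ y = t <;> simp [hf, hy, sub_mul]
    have hmem := ih (f v - s • v) (sub_mem (hW v hv) (W.smul_mem s hv)) fun x hx => by
      have hx' : μ x ≠ s := fun h => by simp [hf, h] at hx
      have hv' : x ∈ v.support := by
        by_contra h
        simp_all
      have := hsupp x hv'
      rw [Finset.mem_insert] at this
      tauto
    rwa [hfilter, Submodule.smul_mem_iff W (sub_ne_zero.2 (Ne.symm hst))] at hmem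

end Finsupp

open Finsupp

/-- The `Mat₂(q)`-submodules of `M(λ)`: subspaces stable under the actions of the generators. -/
structure IsVermaSubmodule (W : Submodule K (VermaSpace K m)) : Prop where
  map_VF11 : ∀ v ∈ W, VF11 q la lb m v ∈ W
  map_VF12 : ∀ v ∈ W, VF12 q la m v ∈ W
  map_VF21 : ∀ v ∈ W, VF21 lb m v ∈ W
  map_VF22 : ∀ v ∈ W, VF22 (K := K) m v ∈ W

section Verma

variable {q la lb m}

theorem VF11_single (a : Fin m) (b : ℕ) :
    VF11 q la lb m (single (a, b) 1) =
      if b = 0 then 0 else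
      ((if (a : ℕ) = m - 1 then lb else 1) * la * q ^ (a : ℕ) * (q ^ b - 1)) •
        single (a + 1, b - 1) (1 : K) := by
  simp [VF11, linearCombination_single]

theorem VF12_apply {n : ℕ} (v : VermaSpace K n) (x : Fin n × ℕ) :
    VF12 q la n v x = q ^ ((x.1 : ℕ) + x.2) * la * v x :=
  linearCombination_smul_single_one_apply _ v x

theorem VF21_single (a : Fin m) (b : ℕ) :
    VF21 lb m (single (a, b) 1) =
      (if (a : ℕ) = m - 1 then lb else 1) • single (a + 1, b) (1 : K) := by
  simp [VF21, linearCombination_single]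

theorem VF22_pow {n : ℕ} (d : ℕ) :
    VF22 (K := K) n ^ d = lmapDomain K K (Prod.map id (· + d)) := by
  induction d with
  | zero =>
    ext x : 2
    simp [Prod.map]
  | succ d ih =>
    have hVF22 : VF22 (K := K) n = lmapDomain K K (Prod.map id (· + 1)) := by
      ext x : 2
      simp [VF22, Prod.map]
    rw [pow_succ', ih, hVF22, Module.End.mul_eq_comp, ← lmapDomain_comp]
    congr 1

open Fin.CommRing in
theorem forall_single_mem_of_single_mem {W : Submodule K (VermaSpace K m)}
    (h21 : ∀ v ∈ W, VF21 lb m v ∈ W) (hlb : lb ≠ 0) {a₀ : Fin m} {b : ℕ}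
    (h : single (a₀, b) (1 : K) ∈ W) (a : Fin m) : single (a, b) (1 : K) ∈ W := by
  have hsucc : ∀ a' : Fin m, single (a', b) (1 : K) ∈ W → single (a' + 1, b) (1 : K) ∈ W := by
    intro a' ha'
    have := h21 _ ha'
    rw [VF21_single] at this
    exact (Submodule.smul_mem_iff W (by split_ifs <;> simp [hlb])).1 this
  have hiter : ∀ k : ℕ, single (a₀ + k, b) (1 : K) ∈ W := by
    intro k
    induction k with
    | zero => simpa using h
    | succ k ih => simpa [← add_assoc] using hsucc _ ih
  simpa using hiter (a - a₀).val

theorem single_sub_one_mem_of_forall_single_mem {W : Submodule K (VermaSpace K m)}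
    (h11 : ∀ v ∈ W, VF11 q la lb m v ∈ W) (hq : q ≠ 0) (hla : la ≠ 0) (hlb : lb ≠ 0) {b : ℕ}
    (hqb : q ^ b ≠ 1) (h : ∀ a, single (a, b) (1 : K) ∈ W) (a : Fin m) :
    single (a, b - 1) (1 : K) ∈ W := by
  have hb : b ≠ 0 := by rintro rfl; exact hqb (pow_zero q)
  have := h11 _ (h (a - 1))
  rw [VF11_single, if_neg hb, sub_add_cancel] at this
  refine (Submodule.smul_mem_iff W ?_).1 this
  have : (if ((a - 1 : Fin m) : ℕ) = m - 1 then lb else 1) ≠ 0 := by split_ifs <;> simp [hlb]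
  have : q ^ b - 1 ≠ 0 := sub_ne_zero.2 hqb
  positivity

/-- `VF11` lowers the level `c` with the coefficient `q ^ c - 1`, which vanishes only at multiples
of `m`. -/
theorem single_mem_of_div_mul_le_of_le {W : Submodule K (VermaSpace K m)}
    (h11 : ∀ v ∈ W, VF11 q la lb m v ∈ W) (hq : IsPrimitiveRoot q m) (hla : la ≠ 0)
    (hlb : lb ≠ 0) {b : ℕ} (h : ∀ a, single (a, b) (1 : K) ∈ W) {c : ℕ} (hc : b / m * m ≤ c)
    (hcb : c ≤ b) (a : Fin m) : single (a, c) (1 : K) ∈ W := by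
  suffices ∀ k ≤ b - b / m * m, ∀ a, single (a, b - k) (1 : K) ∈ W by
    simpa [Nat.sub_sub_self hcb] using this (b - c) (by omega) a
  intro k
  induction k with
  | zero => exact fun _ => h
  | succ k ih =>
    intro hk
    have hmk : b / m * m < b - k := by omega
    have hkm : b - k < (b / m + 1) * m := by
      have := Nat.lt_div_mul_add (a := b) (NeZero.pos m)
      rw [add_one_mul]
      omega
    have hqb : q ^ (b - k) ≠ 1 := by
      rw [Ne, hq.pow_eq_one_iff_dvd]
      rintro ⟨t, ht⟩
      rw [ht, mul_comm m t] at hmk hkm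
      have := lt_of_mul_lt_mul_right' hmk
      have := lt_of_mul_lt_mul_right' hkm
      omega
    rw [show b - (k + 1) = b - k - 1 by omega]
    exact single_sub_one_mem_of_forall_single_mem h11 (hq.ne_zero (NeZero.ne m)) hla hlb hqb
      (ih (by omega))

theorem single_mem_Mpm {n j : ℕ} {a : Fin n} {b : ℕ} (h : j * n ≤ b) :
    single (a, b) (1 : K) ∈ Mpm n j :=
  Submodule.subset_span ⟨a, b, h, rfl⟩

theorem Mpm_eq_supported (n j : ℕ) : Mpm n j = supported K K {x : Fin n × ℕ | j * n ≤ x.2} := by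
  rw [supported_eq_span_single, Mpm]
  congr 1
  ext v
  constructor
  · rintro ⟨a, b, hb, rfl⟩
    exact ⟨(a, b), hb, rfl⟩
  · rintro ⟨⟨a, b⟩, hb, rfl⟩
    exact ⟨a, b, hb, rfl⟩

theorem Mpm_zero (n : ℕ) : Mpm (K := K) n 0 = ⊤ := by
  simp [Mpm_eq_supported]

theorem Mpm_antitone (n : ℕ) : Antitone (Mpm (K := K) n) :=
  fun _ _ h => by
    rw [Mpm_eq_supported, Mpm_eq_supported]
    exact supported_mono fun x (hx : _ ≤ x.2) => (Nat.mul_le_mul_right n h).trans hx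

theorem Mpm_inf_Mpm (n i j : ℕ) : Mpm (K := K) n i ⊓ Mpm n j = Mpm n (max i j) := by
  rcases le_total i j with h | h
  · rw [max_eq_right h, inf_eq_right.2 (Mpm_antitone n h)]
  · rw [max_eq_left h, inf_eq_left.2 (Mpm_antitone n h)]

theorem Mpm_sup_Mpm (n i j : ℕ) : Mpm (K := K) n i ⊔ Mpm n j = Mpm n (min i j) := by
  rcases le_total i j with h | h
  · rw [min_eq_left h, sup_eq_left.2 (Mpm_antitone n h)]
  · rw [min_eq_right h, sup_eq_right.2 (Mpm_antitone n h)]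

theorem Mpm_strictAnti : StrictAnti (Mpm (K := K) m) := by
  refine (Mpm_antitone m).strictAnti_of_injective fun i j h => ?_
  have key : ∀ {i j : ℕ}, Mpm (K := K) m i = Mpm m j → j ≤ i := fun {i j} h => by
    have hmem := h ▸ single_mem_Mpm (K := K) (a := (0 : Fin m)) (le_refl (i * m))
    rw [Mpm_eq_supported, mem_supported] at hmem
    exact Nat.le_of_mul_le_mul_right (@hmem ((0 : Fin m), i * m) (by simp)) (NeZero.pos m)
  exact le_antisymm (key h.symm) (key h)

theorem forall_map_mem_Mpm_of_single {n j : ℕ} {f : VermaSpace K n →ₗ[K] VermaSpace K n}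
    (h : ∀ a b, j * n ≤ b → f (single (a, b) 1) ∈ Mpm n j) : ∀ v ∈ Mpm n j, f v ∈ Mpm n j :=
  fun _ hv => Submodule.span_le (p := (Mpm n j).comap f) |>.2
    (by rintro _ ⟨a, b, hb, rfl⟩; exact h a b hb) hv

theorem isVermaSubmodule_Mpm (hq1 : q ^ m = 1) (j : ℕ) :
    IsVermaSubmodule q la lb m (Mpm m j) where
  map_VF11 := forall_map_mem_Mpm_of_single fun a b hb => by
    by_cases h0 : b = 0
    · simp [VF11_single, h0]
    rw [VF11_single, if_neg h0]
    rcases hb.lt_or_eq with hb | rfl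
    · exact Submodule.smul_mem _ _ (single_mem_Mpm (by omega))
    · rw [mul_comm j m, pow_mul, hq1, one_pow, sub_self, mul_zero, zero_smul]
      exact zero_mem _
  map_VF12 := forall_map_mem_Mpm_of_single fun a b hb => by
    rw [VF12, linearCombination_single, one_smul]
    exact Submodule.smul_mem _ _ (single_mem_Mpm hb)
  map_VF21 := forall_map_mem_Mpm_of_single fun a b hb => by
    rw [VF21_single]
    exact Submodule.smul_mem _ _ (single_mem_Mpm hb)
  map_VF22 := forall_map_mem_Mpm_of_single fun a b hb => by
    rw [VF22, linearCombination_single, one_smul]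
    exact single_mem_Mpm (Nat.le_succ_of_le hb)

theorem finrank_quotient_Mpm (n p : ℕ) :
    Module.finrank K (VermaSpace K n ⧸ Mpm (K := K) n p) = p * n ^ 2 := by
  let s : Set (Fin n × ℕ) := {x | p * n ≤ x.2}
  have hcompl : IsCompl (supported K K s) (supported K K sᶜ) :=
    ⟨disjoint_supported_supported disjoint_compl_right, by
      rw [codisjoint_iff, ← supported_union, Set.union_compl_self, supported_univ]⟩
  let e : (sᶜ : Set (Fin n × ℕ)) ≃ Fin n × Fin (p * n) :=
    { toFun := fun x => (x.1.1, ⟨x.1.2, not_le.1 x.2⟩)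
      invFun := fun y => ⟨(y.1, y.2), not_le.2 y.2.isLt⟩
      left_inv := fun _ => rfl
      right_inv := fun _ => rfl }
  rw [Mpm_eq_supported]
  refine ((Submodule.quotientEquivOfIsCompl _ _ hcompl).trans
    ((supportedEquivFinsupp sᶜ).trans (Finsupp.domLCongr e))).finrank_eq.trans ?_
  simp only [Module.finrank_finsupp_self, Fintype.card_prod, Fintype.card_fin]
  ring

/-- Project `v` to an eigenspace of the diagonal operator `VF12`; on a fixed level its eigenvalue
`λ₁ q^(a+b)` determines `a`. -/
theorem exists_mem_single_term_at_level {W : Submodule K (VermaSpace K m)}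
    (h12 : ∀ v ∈ W, VF12 q la m v ∈ W) (hq : IsPrimitiveRoot q m) (hla : la ≠ 0)
    {v : VermaSpace K m} (hv : v ∈ W) {a₀ : Fin m} {b : ℕ} (hva₀ : v (a₀, b) ≠ 0) :
    ∃ w ∈ W, w (a₀, b) ≠ 0 ∧ ∀ a, w (a, b) ≠ 0 → a = a₀ := by
  classical
  let μ : Fin m × ℕ → K := fun x => q ^ ((x.1 : ℕ) + x.2) * la
  refine ⟨v.filter (fun x => μ x = μ (a₀, b)), filter_mem_of_diagonal VF12_apply h12 hv _,
    by rwa [filter_apply, if_pos rfl], fun a ha => ?_⟩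
  have heq : μ (a, b) = μ (a₀, b) := by
    by_contra h
    exact ha (by simp [h])
  simp only [μ, pow_add] at heq
  have hq0 : q ^ b ≠ 0 := pow_ne_zero _ (hq.ne_zero (NeZero.ne m))
  exact Fin.ext (hq.pow_inj a.isLt a₀.isLt (mul_right_cancel₀ hq0 (mul_right_cancel₀ hla heq)))

/-- `VF22 ^ d` sends the unique lowest term `f(a₀,b₀)` of `w` to `f(a₀,b₀+d)` and all its other
terms strictly above level `b₀ + d`, where, by downward induction from `M_{p,m} ≤ W`, all basis
vectors already lie in `W`. -/
theorem single_mem_of_unique_lowest_term {W : Submodule K (VermaSpace K m)}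
    (h21 : ∀ v ∈ W, VF21 lb m v ∈ W) (h22 : ∀ v ∈ W, VF22 (K := K) m v ∈ W) (hlb : lb ≠ 0)
    {p : ℕ} (hp : Mpm m p ≤ W) {w : VermaSpace K m} (hw : w ∈ W) {a₀ : Fin m} {b₀ : ℕ}
    (hw₀ : w (a₀, b₀) ≠ 0) (hlow : ∀ x ∈ w.support, x ≠ (a₀, b₀) → b₀ < x.2) ⦃c : ℕ⦄
    (hc : b₀ ≤ c) (a : Fin m) : single (a, c) (1 : K) ∈ W := by
  classical
  suffices ∀ n c, p * m ≤ c + n → b₀ ≤ c → ∀ a, single (a, c) (1 : K) ∈ W from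
    this (p * m) c (by omega) hc a
  intro n
  induction n with
  | zero => exact fun c hpc _ a => hp (single_mem_Mpm (by omega))
  | succ n ih =>
    intro c hpc hc
    obtain ⟨d, rfl⟩ := Nat.exists_eq_add_of_le hc
    have hinj : Function.Injective (Prod.map id (· + d) : Fin m × ℕ → Fin m × ℕ) :=
      Function.injective_id.prodMap (add_left_injective d)
    have hu := Module.End.pow_apply_mem_of_forall_mem d h22 w hw
    rw [VF22_pow, lmapDomain_apply] at hu
    refine forall_single_mem_of_single_mem h21 hlb
      (single_mem_of_apply_ne_zero (x₀ := (a₀, b₀ + d)) hu ?_ ?_)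
    · exact (mapDomain_apply hinj w (a₀, b₀)).symm ▸ hw₀
    · intro x hx hne
      obtain ⟨y, hy, rfl⟩ := Finset.mem_image.1 (mapDomain_support hx)
      have := hlow y hy (by rintro rfl; exact hne rfl)
      exact ih _ (by simp only; omega) (by simp only; omega) _

theorem eq_Mpm_of_isVermaSubmodule (hq : IsPrimitiveRoot q m) (hla : la ≠ 0) (hlb : lb ≠ 0)
    {W : Submodule K (VermaSpace K m)} (hW : IsVermaSubmodule q la lb m W) {p : ℕ}
    (hp : Mpm m p ≤ W) : ∃ j, W = Mpm m j := by
  classical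
  have hex : ∃ b, ∃ v ∈ W, ∃ a : Fin m, v (a, b) ≠ 0 :=
    ⟨p * m, _, hp (single_mem_Mpm (a := 0) le_rfl), 0, by simp⟩
  obtain ⟨v, hv, a₀, hva₀⟩ := Nat.find_spec hex
  have hmin : ∀ u ∈ W, ∀ x : Fin m × ℕ, u x ≠ 0 → Nat.find hex ≤ x.2 :=
    fun u hu x hx => Nat.find_min' hex ⟨u, hu, x.1, hx⟩
  set b₀ := Nat.find hex
  obtain ⟨w, hw, hw₀, hunique⟩ := exists_mem_single_term_at_level hW.map_VF12 hq hla hv hva₀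
  have hlow : ∀ x ∈ w.support, x ≠ (a₀, b₀) → b₀ < x.2 := by
    intro x hx hne
    have hx0 := mem_support_iff.1 hx
    refine (hmin w hw x hx0).lt_of_ne fun h => hne (Prod.ext (hunique x.1 ?_) h.symm)
    rwa [h]
  have habove := single_mem_of_unique_lowest_term hW.map_VF21 hW.map_VF22 hlb hp hw hw₀ hlow
  refine ⟨b₀ / m, le_antisymm (fun u hu => ?_) ?_⟩
  · rw [Mpm_eq_supported, mem_supported]
    exact fun x hx => (Nat.div_mul_le_self b₀ m).trans (hmin u hu x (mem_support_iff.1 hx))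
  · rw [Mpm_eq_supported]
    refine le_trans (supported_mono fun x (hx : b₀ / m * m ≤ x.2) => ?_)
      (supported_le_of_single_mem W)
    rcases le_total b₀ x.2 with h | h
    · exact habove h x.1
    · exact single_mem_of_div_mul_le_of_le hW.map_VF11 hq hla hlb (habove le_rfl) hx h x.1

end Verma

/-- Let `q` be a primitive `m`-th root of unity, `λ₁, λ₂ ∈ K` nonzero
and `p > 1`. The quotient `Q_{p,m} = M(λ)/M_{p,m}` of the Verma module has `K`-dimension
`p·m²`, is not simple, is not semisimple, but is indecomposable. Submodules of `Q_{p,m}`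
correspond to invariant subspaces of `M(λ)` containing `M_{p,m}`. -/
theorem DDMat2_verma_quotient_Qp_indecomposable
    (hq1 : q ^ m = 1) (hq2 : ∀ k : ℕ, 1 ≤ k → k < m → q ^ k ≠ 1)
    (hla : la ≠ 0) (hlb : lb ≠ 0) (p : ℕ) (hp : 1 < p) :
    -- the dimension of `Q_{p,m}` is `p·m²`
    Module.finrank K (VermaSpace K m ⧸ Mpm (K := K) m p) = p * m ^ 2 ∧
    -- `Q_{p,m}` is not simple: there is an invariant subspace strictly between
    -- `M_{p,m}` and the whole module
    (∃ W : Submodule K (VermaSpace K m),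
        (∀ v ∈ W, VF11 q la lb m v ∈ W) ∧ (∀ v ∈ W, VF12 q la m v ∈ W) ∧
        (∀ v ∈ W, VF21 lb m v ∈ W) ∧ (∀ v ∈ W, VF22 (K := K) m v ∈ W) ∧
        Mpm (K := K) m p < W ∧ W < ⊤) ∧
    -- `Q_{p,m}` is not semisimple: some invariant subspace of the quotient has no
    -- invariant complement
    ¬ (∀ W : Submodule K (VermaSpace K m),
        (∀ v ∈ W, VF11 q la lb m v ∈ W) → (∀ v ∈ W, VF12 q la m v ∈ W) →
        (∀ v ∈ W, VF21 lb m v ∈ W) → (∀ v ∈ W, VF22 (K := K) m v ∈ W) →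
        Mpm (K := K) m p ≤ W →
        ∃ W' : Submodule K (VermaSpace K m),
          (∀ v ∈ W', VF11 q la lb m v ∈ W') ∧ (∀ v ∈ W', VF12 q la m v ∈ W') ∧
          (∀ v ∈ W', VF21 lb m v ∈ W') ∧ (∀ v ∈ W', VF22 (K := K) m v ∈ W') ∧
          Mpm (K := K) m p ≤ W' ∧ W ⊓ W' = Mpm (K := K) m p ∧ W ⊔ W' = ⊤) ∧
    -- `Q_{p,m}` is indecomposable: it is not the direct sum of two nonzero submodules
    (∀ W₁ W₂ : Submodule K (VermaSpace K m),
        (∀ v ∈ W₁, VF11 q la lb m v ∈ W₁) → (∀ v ∈ W₁, VF12 q la m v ∈ W₁) →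
        (∀ v ∈ W₁, VF21 lb m v ∈ W₁) → (∀ v ∈ W₁, VF22 (K := K) m v ∈ W₁) →
        (∀ v ∈ W₂, VF11 q la lb m v ∈ W₂) → (∀ v ∈ W₂, VF12 q la m v ∈ W₂) →
        (∀ v ∈ W₂, VF21 lb m v ∈ W₂) → (∀ v ∈ W₂, VF22 (K := K) m v ∈ W₂) →
        Mpm (K := K) m p ≤ W₁ → Mpm (K := K) m p ≤ W₂ →
        W₁ ⊓ W₂ = Mpm (K := K) m p → W₁ ⊔ W₂ = ⊤ →
        W₁ = Mpm (K := K) m p ∨ W₂ = Mpm (K := K) m p) := by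
  have hq : IsPrimitiveRoot q m := .mk_of_lt q (NeZero.pos m) hq1 fun l hl => hq2 l hl
  have hMpm1 := isVermaSubmodule_Mpm (la := la) (lb := lb) hq1 1
  have hinj := (Mpm_strictAnti (K := K) (m := m)).injective
  refine ⟨finrank_quotient_Mpm m p, ⟨Mpm m 1, hMpm1.1, hMpm1.2, hMpm1.3, hMpm1.4,
    Mpm_strictAnti hp, Mpm_zero (K := K) m ▸ Mpm_strictAnti one_pos⟩, fun hss => ?_, ?_⟩
  · obtain ⟨W', h11, h12, h21, h22, hpW', hinf, hsup⟩ :=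
      hss _ hMpm1.1 hMpm1.2 hMpm1.3 hMpm1.4 (Mpm_antitone m hp.le)
    obtain ⟨j, rfl⟩ := eq_Mpm_of_isVermaSubmodule hq hla hlb ⟨h11, h12, h21, h22⟩ hpW'
    rw [Mpm_inf_Mpm, hinj.eq_iff] at hinf
    rw [Mpm_sup_Mpm, ← Mpm_zero (K := K) m, hinj.eq_iff] at hsup
    omega
  · intro W₁ W₂ h11 h12 h21 h22 k11 k12 k21 k22 hpW₁ hpW₂ hinf _
    obtain ⟨j₁, rfl⟩ := eq_Mpm_of_isVermaSubmodule hq hla hlb ⟨h11, h12, h21, h22⟩ hpW₁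
    obtain ⟨j₂, rfl⟩ := eq_Mpm_of_isVermaSubmodule hq hla hlb ⟨k11, k12, k21, k22⟩ hpW₂
    rw [Mpm_inf_Mpm, hinj.eq_iff] at hinf
    rcases max_choice j₁ j₂ with h | h
    · exact .inl (by rw [← hinf, h])
    · exact .inr (by rw [← hinf, h])
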